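/- Let V be a real inner product space, let A, B ∈ V be nonzero, and let ε ≥ 0. If L_attn(A,B) ≤ ε, then, setting λ = ‖A‖/‖B‖ (which is positive), one has ‖A − λ • B‖ ≤ ‖A‖ · √(2ε). In other words, a small attention distillation loss forces A to be close to a positive scalar multiple of B, with error controlled by √(2ε). -/

import Mathlib

/-- The attention distillation loss `L_attn(A,B) = 1 - ⟨A,B⟩/(‖A‖·‖B‖)`
(Eq. (13) of the paper). -/
noncomputable def Lattn {V : Type*} [NormedAddCommGroup V] [InnerProductSpace ℝ V]
    (A B : V) : ℝ :=
  1 - (inner ℝ A B : ℝ) / (‖A‖ * ‖B‖)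

section
variable {V : Type*} [NormedAddCommGroup V] [InnerProductSpace ℝ V]

theorem norm_sub_norm_div_norm_smul_sq (A : V) {B : V} (hB : B ≠ 0) :
    ‖A - (‖A‖ / ‖B‖) • B‖ ^ 2 = ‖A‖ ^ 2 * (2 * Lattn A B) := by
  have hB' : ‖B‖ ≠ 0 := norm_ne_zero_iff.mpr hB
  rcases eq_or_ne A 0 with rfl | hA
  · simp
  have hA' : ‖A‖ ≠ 0 := norm_ne_zero_iff.mpr hA
  rw [norm_sub_sq_real, real_inner_smul_right, norm_smul, Real.norm_of_nonneg (by positivity),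
    Lattn]
  field_simp
  ring

theorem norm_sub_norm_div_norm_smul (A : V) {B : V} (hB : B ≠ 0) :
    ‖A - (‖A‖ / ‖B‖) • B‖ = ‖A‖ * √(2 * Lattn A B) := by
  rw [← Real.sqrt_sq (norm_nonneg (A - _)), norm_sub_norm_div_norm_smul_sq A hB,
    Real.sqrt_mul (sq_nonneg _), Real.sqrt_sq (norm_nonneg A)]

end

theorem norm_sub_smul_le_of_Lattn_le_general
    {V : Type*} [NormedAddCommGroup V] [InnerProductSpace ℝ V]
    (A B : V) (hA : A ≠ 0) (hB : B ≠ 0) (ε : ℝ)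
    (h : Lattn A B ≤ ε) :
    0 < ‖A‖ / ‖B‖ ∧ ‖A - (‖A‖ / ‖B‖) • B‖ ≤ ‖A‖ * Real.sqrt (2 * ε) := by
  refine ⟨by positivity, ?_⟩
  rw [norm_sub_norm_div_norm_smul A hB]
  gcongr

/-- A small attention distillation loss forces `A` to be close to the positive
scalar multiple `(‖A‖/‖B‖) • B` of `B`, with error controlled by `√(2ε)`. -/
theorem norm_sub_smul_le_of_Lattn_le
    {V : Type*} [NormedAddCommGroup V] [InnerProductSpace ℝ V]
    (A B : V) (hA : A ≠ 0) (hB : B ≠ 0) (ε : ℝ) (hε : 0 ≤ ε)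
    (h : Lattn A B ≤ ε) :
    0 < ‖A‖ / ‖B‖ ∧ ‖A - (‖A‖ / ‖B‖) • B‖ ≤ ‖A‖ * Real.sqrt (2 * ε) :=
  norm_sub_smul_le_of_Lattn_le_general A B hA hB ε h
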